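/- arXiv:math/0510222 — 7 statements merged into one kernel-verified Lean document; each statement's English description precedes it below -/
import Mathlib

section
/- For all x, a in R, h'_x(a) − h_x(a) = N(x)·N(a) − N(x·a). -/
/-!
Put `f i j = tⁱ(x) · tʲ(a)`. Then `N(x)·N(a) = ∑_{i,j<n} f i j` and `N(x·a) = ∑_{i<n} f i i`.
The sum `-h_x(a)` is the part of this square strictly below the diagonal. In `h'_x(a)` the summand
`tᵏ(x · t⁻ⁱ(a)) = f k (k + n - i)` uses `tⁿ = id`, and `j = k + n - i` runs over `k < j < n`,
so `h'_x(a)` is the part strictly above the diagonal.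
-/

open Finset

namespace Finset

variable {M : Type*} [AddCommMonoid M]

theorem sum_range_sum_range_eq_lower_add_diag_add_upper (f : ℕ → ℕ → M) (n : ℕ) :
    ∑ i ∈ range n, ∑ j ∈ range n, f i j =
      ∑ i ∈ range n, ∑ j ∈ range i, f i j + ∑ i ∈ range n, f i i +
        ∑ i ∈ range n, ∑ j ∈ Ico (i + 1) n, f i j := by
  rw [← sum_add_distrib, ← sum_add_distrib]
  refine sum_congr rfl fun i hi => ?_
  have hin : i < n := mem_range.mp hi
  rw [range_eq_Ico, ← sum_Ico_consecutive _ i.zero_le hin.le, sum_eq_sum_Ico_succ_bot hin,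
    add_assoc, ← range_eq_Ico]

theorem sum_Ico_one_sum_range_eq_sum_range_sum_Ico_succ (g : ℕ → ℕ → M) (n : ℕ) :
    ∑ i ∈ Ico 1 n, ∑ k ∈ range i, g k (k + n - i) =
      ∑ k ∈ range n, ∑ j ∈ Ico (k + 1) n, g k j := by
  rw [sum_comm' (t' := range n) (s' := fun k => Ico (k + 1) n) fun i k => by
    simp only [mem_Ico, mem_range]; omega]
  refine sum_congr rfl fun k _ => ?_
  rw [sum_Ico_reflect (g k) (k + 1) (by omega : n ≤ k + n + 1)]
  congr 1
  ext j
  simp only [mem_Ico]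
  omega

theorem sum_Ico_one_eq_sum_range {f : ℕ → M} (h0 : f 0 = 0) (n : ℕ) :
    ∑ i ∈ Ico 1 n, f i = ∑ i ∈ range n, f i :=
  sum_subset (fun i hi => mem_range.mpr (mem_Ico.mp hi).2) fun i hi hi' => by
    obtain rfl : i = 0 := by simp only [mem_Ico, mem_range] at hi hi'; omega
    exact h0

end Finset

theorem RingAut.pow_inv_apply_of_pow_eq_one {R : Type*} [Semiring R] {t : RingAut R} {n i : ℕ}
    (htn : t ^ n = 1) (hi : i ≤ n) (a : R) : ((t ^ i)⁻¹) a = (t ^ (n - i)) a := by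
  rw [pow_sub t hi, htn, one_mul]

theorem stmt1_general (R : Type*) [Ring R] (t : RingAut R) (n : ℕ)
    (htn : t ^ n = 1) (x a : R) :
    (∑ i ∈ Finset.Ico 1 n, ∑ k ∈ Finset.range i, (t ^ k) (x * ((t ^ i)⁻¹) a)) - (-∑ i ∈ Finset.Ico 1 n, (t ^ i) x * ∑ k ∈ Finset.range i, (t ^ k) a) = (∑ i ∈ Finset.range n, (t ^ i) x) * (∑ i ∈ Finset.range n, (t ^ i) a) - (∑ i ∈ Finset.range n, (t ^ i) (x * a)) := by
  set f : ℕ → ℕ → R := fun i j => (t ^ i) x * (t ^ j) a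
  have upper : ∑ i ∈ Ico 1 n, ∑ k ∈ range i, (t ^ k) (x * ((t ^ i)⁻¹) a) =
      ∑ k ∈ range n, ∑ j ∈ Ico (k + 1) n, f k j := by
    rw [← sum_Ico_one_sum_range_eq_sum_range_sum_Ico_succ]
    refine sum_congr rfl fun i hi => sum_congr rfl fun k _ => ?_
    have hin : i ≤ n := (mem_Ico.mp hi).2.le
    rw [map_mul, RingAut.pow_inv_apply_of_pow_eq_one htn hin, ← RingAut.mul_apply, ← pow_add,
      Nat.add_sub_assoc hin]
  have lower : ∑ i ∈ Ico 1 n, (t ^ i) x * ∑ k ∈ range i, (t ^ k) a =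
      ∑ i ∈ range n, ∑ j ∈ range i, f i j := by
    simp only [f, ← mul_sum]
    exact sum_Ico_one_eq_sum_range (by simp) n
  have diag : ∑ i ∈ range n, (t ^ i) (x * a) = ∑ i ∈ range n, f i i := by
    simp only [f, map_mul]
  rw [upper, lower, diag, sum_mul_sum, sum_range_sum_range_eq_lower_add_diag_add_upper]
  abel

theorem stmt1 (R : Type*) [Ring R] (t : RingAut R) (n : ℕ) (hn : 2 ≤ n)
    (htn : t ^ n = 1) (x a : R) :
    (∑ i ∈ Finset.Ico 1 n, ∑ k ∈ Finset.range i, (t ^ k) (x * ((t ^ i)⁻¹) a)) - (-∑ i ∈ Finset.Ico 1 n, (t ^ i) x * ∑ k ∈ Finset.range i, (t ^ k) a) = (∑ i ∈ Finset.range n, (t ^ i) x) * (∑ i ∈ Finset.range n, (t ^ i) a) - (∑ i ∈ Finset.range n, (t ^ i) (x * a)) :=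
  stmt1_general R t n htn x a
end

section
/- For all x in R, T ∘ h_x = T ∘ h'_x, i.e., for all a ∈ R, T(h_x(a)) = T(h'_x(a)). -/
/-!
With `S i = ∑ k < i, t ^ k` one has `t ∘ S i = S (i + 1) - id`, so both sides telescope:
`T (h'_x a) = ∑ 0 < i < n, (t ^ i x * a - x * t⁻ⁱ a)` and
`T (h_x a) = ∑ 0 < i ≤ n, t ^ i x * a - t ^ n x * N a`.
When `t ^ n = 1`, the shift `i ↦ i + 1` and the inversion `i ↦ -i` permute the exponents
modulo `n`, so `∑ 0 < i ≤ n, t ^ i x = ∑ i < n, t ^ i x` and `N = ∑ i < n, t⁻ⁱ`,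
and the two agree.
-/

open Finset

theorem Finset.sum_Ico_one_eq_sum_range_s3 {M : Type*} [AddCommMonoid M] {f : ℕ → M} (hf : f 0 = 0)
    (m : ℕ) : ∑ i ∈ Ico 1 m, f i = ∑ i ∈ range m, f i := by
  cases m with
  | zero => simp
  | succ m => rw [range_eq_Ico, sum_eq_sum_Ico_succ_bot m.succ_pos, hf, zero_add]

theorem Finset.sum_range_succ_eq_sum_range {M : Type*} [AddCommMonoid M] {f : ℕ → M} {n : ℕ}
    (hf : f n = f 0) : ∑ i ∈ range n, f (i + 1) = ∑ i ∈ range n, f i := by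
  cases n with
  | zero => simp
  | succ m => rw [sum_range_succ, hf, sum_range_succ']

theorem Finset.sum_range_inv_pow {G M : Type*} [Group G] [AddCommMonoid M] (f : G → M)
    {g : G} {n : ℕ} (hg : g ^ n = 1) :
    ∑ i ∈ range n, f (g ^ i)⁻¹ = ∑ i ∈ range n, f (g ^ i) := by
  have hinv : ∀ i ∈ range n, (g ^ (n - 1 - i))⁻¹ = g ^ (i + 1) := fun i hi => by
    rw [inv_eq_iff_mul_eq_one, ← pow_add, ← hg]
    congr 1
    have := mem_range.mp hi
    omega
  rw [← sum_range_reflect, sum_congr rfl fun i hi => congrArg f (hinv i hi)]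
  exact sum_range_succ_eq_sum_range (f := fun i => f (g ^ i)) (by rw [hg, pow_zero])

namespace RingAut

variable {R : Type*} [NonUnitalNonAssocRing R] (t : RingAut R)

theorem apply_pow_apply (k : ℕ) (y : R) : t ((t ^ k) y) = (t ^ (k + 1)) y := by
  rw [pow_succ', mul_apply]

theorem apply_sum_range_pow_apply (i : ℕ) (y : R) :
    t (∑ k ∈ range i, (t ^ k) y) = ∑ k ∈ range (i + 1), (t ^ k) y - y := by
  rw [sum_range_succ', pow_zero, one_apply, add_sub_cancel_right, map_sum]
  simp only [apply_pow_apply]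

theorem apply_sum_range_pow_apply_sub (i : ℕ) (y : R) :
    t (∑ k ∈ range i, (t ^ k) y) - ∑ k ∈ range i, (t ^ k) y = (t ^ i) y - y := by
  rw [apply_sum_range_pow_apply, sum_range_succ]
  abel

theorem apply_sum_sum_range_pow_apply_sub (s : Finset ℕ) (y : ℕ → R) :
    t (∑ i ∈ s, ∑ k ∈ range i, (t ^ k) (y i))
        - ∑ i ∈ s, ∑ k ∈ range i, (t ^ k) (y i)
      = ∑ i ∈ s, ((t ^ i) (y i) - y i) := by
  rw [map_sum, ← sum_sub_distrib]
  exact sum_congr rfl fun i _ => apply_sum_range_pow_apply_sub t i (y i)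

theorem apply_sum_pow_apply_mul_sum_sub (x a : R) (m : ℕ) :
    t (∑ i ∈ Ico 1 m, (t ^ i) x * ∑ k ∈ range i, (t ^ k) a)
        - ∑ i ∈ Ico 1 m, (t ^ i) x * ∑ k ∈ range i, (t ^ k) a
      = (t ^ m) x * ∑ k ∈ range m, (t ^ k) a - ∑ i ∈ range m, (t ^ (i + 1)) x * a := by
  have hterm : ∀ i,
      t ((t ^ i) x * ∑ k ∈ range i, (t ^ k) a) - (t ^ i) x * ∑ k ∈ range i, (t ^ k) a
        = ((t ^ (i + 1)) x * ∑ k ∈ range (i + 1), (t ^ k) a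
            - (t ^ i) x * ∑ k ∈ range i, (t ^ k) a)
          - (t ^ (i + 1)) x * a := fun i => by
    rw [map_mul, apply_pow_apply, apply_sum_range_pow_apply, mul_sub]
    abel
  rw [sum_Ico_one_eq_sum_range_s3 (by simp), map_sum, ← sum_sub_distrib,
    sum_congr rfl fun i _ => hterm i, sum_sub_distrib,
    sum_range_sub (fun i => (t ^ i) x * ∑ k ∈ range i, (t ^ k) a)]
  simp only [range_zero, sum_empty, mul_zero, sub_zero]

end RingAut

theorem stmt3_general (R : Type*) [Ring R] (t : RingAut R) (n : ℕ)
    (htn : t ^ n = 1) (x : R) :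
    ∀ a : R, t (-∑ i ∈ Finset.Ico 1 n, (t ^ i) x * ∑ k ∈ Finset.range i, (t ^ k) a) - (-∑ i ∈ Finset.Ico 1 n, (t ^ i) x * ∑ k ∈ Finset.range i, (t ^ k) a) = t (∑ i ∈ Finset.Ico 1 n, ∑ k ∈ Finset.range i, (t ^ k) (x * ((t ^ i)⁻¹) a)) - (∑ i ∈ Finset.Ico 1 n, ∑ k ∈ Finset.range i, (t ^ k) (x * ((t ^ i)⁻¹) a)) := by
  intro a
  have hx : (t ^ n) x = x := by rw [htn, RingAut.one_apply]
  have hshift : ∑ i ∈ range n, (t ^ (i + 1)) x * a = ∑ i ∈ range n, (t ^ i) x * a :=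
    sum_range_succ_eq_sum_range (f := fun i => (t ^ i) x * a)
      (by rw [hx, pow_zero, RingAut.one_apply])
  have hreflect : ∑ i ∈ range n, (t ^ i)⁻¹ a = ∑ i ∈ range n, (t ^ i) a :=
    sum_range_inv_pow (fun s : RingAut R => s a) htn
  rw [map_neg, neg_sub_neg, ← neg_sub, RingAut.apply_sum_pow_apply_mul_sum_sub,
    RingAut.apply_sum_sum_range_pow_apply_sub, sum_Ico_one_eq_sum_range_s3 (by simp), sum_sub_distrib]
  simp only [map_mul, ← RingAut.mul_apply, mul_inv_cancel, RingAut.one_apply]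
  rw [← mul_sum, hx, hshift, hreflect, neg_sub]

theorem stmt3 (R : Type*) [Ring R] (t : RingAut R) (n : ℕ) (hn : 2 ≤ n)
    (htn : t ^ n = 1) (x : R) :
    ∀ a : R, t (-∑ i ∈ Finset.Ico 1 n, (t ^ i) x * ∑ k ∈ Finset.range i, (t ^ k) a) - (-∑ i ∈ Finset.Ico 1 n, (t ^ i) x * ∑ k ∈ Finset.range i, (t ^ k) a) = t (∑ i ∈ Finset.Ico 1 n, ∑ k ∈ Finset.range i, (t ^ k) (x * ((t ^ i)⁻¹) a)) - (∑ i ∈ Finset.Ico 1 n, ∑ k ∈ Finset.range i, (t ^ k) (x * ((t ^ i)⁻¹) a)) :=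
  stmt3_general R t n htn x
end

section
/- For all x in R, N ∘ j_x + h_x ∘ T = N ∘ j'_x + h'_x ∘ T, i.e., for all a ∈ R, N(x a) + h_x(T(a)) = N(x t(a)) + h'_x(T(a)). -/
/-!
Both sides equal `∑ i < n, tⁱ(x) · a`. On the left, `∑ k < i, tᵏ(T a) = tⁱ a - a` telescopes, so
`h_x (T a) = ∑ i, (tⁱ x · a - tⁱ(x a))`. On the right, after exchanging the double sum, the inner
sum `∑_{k < i < n} t⁻ⁱ(T a)` telescopes to `t⁻ᵏ a - t^{-(n-1)} a = t⁻ᵏ a - t a`, using `tⁿ = 1`.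
-/

open Finset

namespace RingAut

variable {R : Type*} [Ring R] (t : RingAut R)

theorem sum_range_pow_apply_sub_self (a : R) (i : ℕ) :
    ∑ k ∈ range i, (t ^ k) (t a - a) = (t ^ i) a - a := by
  have step (k : ℕ) : (t ^ k) (t a - a) = (t ^ (k + 1)) a - (t ^ k) a := by
    rw [map_sub, pow_succ]; rfl
  rw [sum_congr rfl fun k _ ↦ step k, sum_range_sub (fun k ↦ (t ^ k) a), pow_zero, one_apply]

theorem inv_pow_succ_apply_apply (i : ℕ) (b : R) : (t ^ (i + 1))⁻¹ (t b) = (t ^ i)⁻¹ b := by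
  rw [pow_succ', mul_inv_rev, mul_apply, inv_apply t, RingEquiv.symm_apply_apply]

theorem sum_Ico_inv_pow_apply_sub_self (a : R) {k n : ℕ} (hkn : k < n) (htn : t ^ n = 1) :
    ∑ i ∈ Ico (k + 1) n, (t ^ i)⁻¹ (t a - a) = (t ^ k)⁻¹ a - t a := by
  set f : ℕ → R := fun i ↦ (t ^ i)⁻¹ (t a)
  have step (i : ℕ) : (t ^ i)⁻¹ (t a - a) = -(f (i + 1) - f i) := by
    rw [map_sub, neg_sub]
    simp only [f, inv_pow_succ_apply_apply]
  have hf : f n = t a := by simp only [f, htn, inv_one, one_apply]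
  rw [sum_congr rfl fun i _ ↦ step i, sum_neg_distrib, sum_Ico_sub f hkn, hf, neg_sub]
  simp only [f, inv_pow_succ_apply_apply]

theorem sum_pow_apply_mul_sub_sum_Ico_mul_sum_eq (x a : R) (n : ℕ) :
    ∑ i ∈ range n, (t ^ i) (x * a)
        - ∑ i ∈ Ico 1 n, (t ^ i) x * ∑ k ∈ range i, (t ^ k) (t a - a)
      = ∑ i ∈ range n, (t ^ i) x * a := by
  have hIco : ∑ i ∈ Ico 1 n, (t ^ i) x * ∑ k ∈ range i, (t ^ k) (t a - a)
      = ∑ i ∈ range n, ((t ^ i) (x * a) - (t ^ i) x * a) := by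
    simp only [sum_range_pow_apply_sub_self, mul_sub, map_mul]
    refine sum_subset (fun i hi ↦ ?_) (fun i _ hi ↦ ?_)
    · simp only [mem_Ico, mem_range] at hi ⊢; omega
    · obtain rfl : i = 0 := by simp only [mem_Ico, mem_range] at *; omega
      simp
  rw [hIco, sum_sub_distrib, sub_sub_cancel]

theorem sum_pow_apply_mul_apply_add_sum_Ico_sum_eq (x a : R) {n : ℕ} (htn : t ^ n = 1) :
    ∑ i ∈ range n, (t ^ i) (x * t a)
        + ∑ i ∈ Ico 1 n, ∑ k ∈ range i, (t ^ k) (x * (t ^ i)⁻¹ (t a - a))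
      = ∑ i ∈ range n, (t ^ i) x * a := by
  have hswap : ∑ i ∈ Ico 1 n, ∑ k ∈ range i, (t ^ k) (x * (t ^ i)⁻¹ (t a - a))
      = ∑ k ∈ range n, ∑ i ∈ Ico (k + 1) n, (t ^ k) (x * (t ^ i)⁻¹ (t a - a)) :=
    sum_comm' fun i k ↦ by simp only [mem_Ico, mem_range]; omega
  have hinner (k : ℕ) (hk : k ∈ range n) :
      ∑ i ∈ Ico (k + 1) n, (t ^ k) (x * (t ^ i)⁻¹ (t a - a))
        = (t ^ k) x * a - (t ^ k) (x * t a) := by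
    rw [← map_sum, ← mul_sum, sum_Ico_inv_pow_apply_sub_self t a (mem_range.1 hk) htn,
      mul_sub, map_sub, map_mul, inv_apply, RingEquiv.apply_symm_apply]
  rw [hswap, sum_congr rfl hinner, sum_sub_distrib, add_sub_cancel]

end RingAut

theorem stmt4_general (R : Type*) [Ring R] (t : RingAut R) (n : ℕ)
    (htn : t ^ n = 1) (x : R) :
    ∀ a : R, (∑ i ∈ Finset.range n, (t ^ i) (x * a)) + (-∑ i ∈ Finset.Ico 1 n, (t ^ i) x * ∑ k ∈ Finset.range i, (t ^ k) (t a - a)) = (∑ i ∈ Finset.range n, (t ^ i) (x * t a)) + (∑ i ∈ Finset.Ico 1 n, ∑ k ∈ Finset.range i, (t ^ k) (x * ((t ^ i)⁻¹) (t a - a))) := by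
  intro a
  rw [← sub_eq_add_neg, RingAut.sum_pow_apply_mul_sub_sum_Ico_mul_sum_eq,
    RingAut.sum_pow_apply_mul_apply_add_sum_Ico_sum_eq t x a htn]

theorem stmt4 (R : Type*) [Ring R] (t : RingAut R) (n : ℕ) (hn : 2 ≤ n)
    (htn : t ^ n = 1) (x : R) :
    ∀ a : R, (∑ i ∈ Finset.range n, (t ^ i) (x * a)) + (-∑ i ∈ Finset.Ico 1 n, (t ^ i) x * ∑ k ∈ Finset.range i, (t ^ k) (t a - a)) = (∑ i ∈ Finset.range n, (t ^ i) (x * t a)) + (∑ i ∈ Finset.Ico 1 n, ∑ k ∈ Finset.range i, (t ^ k) (x * ((t ^ i)⁻¹) (t a - a))) :=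
  stmt4_general R t n htn x
end

section
/- For all x, a in R, N(x)·a = j_x(N(a)) + T(h_x(a)), i.e., N(x)·a = x·N(a) + T(h_x(a)). -/
/-!
Put `F i = tⁱ x · ∑_{k<i} tᵏ a`. Since `t (∑_{k<i} tᵏ a) = ∑_{k<i+1} tᵏ a - a`, one has
`t (F i) = F (i+1) - tⁱ⁺¹ x · a`, so `∑_{i<n} (F i - t (F i))` telescopes to
`t (N x) · a - tⁿ x · N a`, which is `N x · a - x · N a` once `tⁿ = 1`. As `F 0 = 0`, the sum over
`1 ≤ i < n` defining `h_x` is the sum over `i < n`.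
-/

open Finset

namespace RingAut

variable {R : Type*} [Ring R] (t : RingAut R)

lemma pow_succ_apply' (i : ℕ) (x : R) : (t ^ (i + 1)) x = t ((t ^ i) x) := by
  rw [pow_succ', mul_apply]

lemma map_sum_range_pow_apply (x : R) (i : ℕ) :
    t (∑ k ∈ range i, (t ^ k) x) = ∑ k ∈ range (i + 1), (t ^ k) x - x := by
  simp only [map_sum, sum_range_succ', pow_succ_apply', pow_zero, one_apply, add_sub_cancel_right]

lemma sum_pow_mul_sum_range_sub_map (x a : R) (n : ℕ) :
    ∑ i ∈ range n, (t ^ i) x * ∑ k ∈ range i, (t ^ k) a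
        - t (∑ i ∈ range n, (t ^ i) x * ∑ k ∈ range i, (t ^ k) a)
      = t (∑ i ∈ range n, (t ^ i) x) * a - (t ^ n) x * ∑ i ∈ range n, (t ^ i) a := by
  induction n with
  | zero => simp
  | succ n ih =>
    have hstep : t ((t ^ n) x * ∑ k ∈ range n, (t ^ k) a)
        = (t ^ (n + 1)) x * ∑ k ∈ range (n + 1), (t ^ k) a - (t ^ (n + 1)) x * a := by
      rw [map_mul, map_sum_range_pow_apply, pow_succ_apply', mul_sub]
    rw [sum_range_succ, map_add, hstep, sum_range_succ (fun i ↦ (t ^ i) x), map_add, add_mul,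
      ← pow_succ_apply', sub_eq_iff_eq_add.mp ih.symm]
    abel

lemma map_sum_range_pow_apply_of_pow_eq_one {n : ℕ} (htn : t ^ n = 1) (x : R) :
    t (∑ i ∈ range n, (t ^ i) x) = ∑ i ∈ range n, (t ^ i) x := by
  rw [map_sum_range_pow_apply, sum_range_succ, htn, one_apply, add_sub_cancel_right]

end RingAut

theorem stmt6_general (R : Type*) [Ring R] (t : RingAut R) (n : ℕ)
    (htn : t ^ n = 1) (x a : R) :
    (∑ i ∈ Finset.range n, (t ^ i) x) * a = x * (∑ i ∈ Finset.range n, (t ^ i) a) + (t (-∑ i ∈ Finset.Ico 1 n, (t ^ i) x * ∑ k ∈ Finset.range i, (t ^ k) a) - (-∑ i ∈ Finset.Ico 1 n, (t ^ i) x * ∑ k ∈ Finset.range i, (t ^ k) a)) := by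
  have hIco : ∑ i ∈ Ico 1 n, (t ^ i) x * ∑ k ∈ range i, (t ^ k) a
      = ∑ i ∈ range n, (t ^ i) x * ∑ k ∈ range i, (t ^ k) a :=
    sum_subset (fun i hi ↦ by simp only [mem_Ico, mem_range] at hi ⊢; omega) fun i hi hi' ↦ by
      obtain rfl : i = 0 := by simp only [mem_Ico, mem_range] at hi hi'; omega
      simp
  rw [map_neg, neg_sub_neg, hIco, t.sum_pow_mul_sum_range_sub_map,
    t.map_sum_range_pow_apply_of_pow_eq_one htn, htn, RingAut.one_apply]
  abel

theorem stmt6 (R : Type*) [Ring R] (t : RingAut R) (n : ℕ) (hn : 2 ≤ n)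
    (htn : t ^ n = 1) (x a : R) :
    (∑ i ∈ Finset.range n, (t ^ i) x) * a = x * (∑ i ∈ Finset.range n, (t ^ i) a) + (t (-∑ i ∈ Finset.Ico 1 n, (t ^ i) x * ∑ k ∈ Finset.range i, (t ^ k) a) - (-∑ i ∈ Finset.Ico 1 n, (t ^ i) x * ∑ k ∈ Finset.range i, (t ^ k) a)) :=
  stmt6_general R t n htn x a
end

section
/- Suppose x ∈ R satisfies N(x) = 1. Then every element a ∈ R killed by the norm map (i.e., with N(a) = 0) satisfies a = T(h'_x(a)). -/
/-!
Telescoping gives `T (∑_{k<i} t^k y) = t^i y - y`, so applying `T` to `h'_x(a)` leaves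
`∑_{i<n} (t^i(x) a - x t^{-i}(a)) = N(x) a - x N(a)`, where the second sum is `N(a)` because
`i ↦ -i` permutes the exponents modulo `n`. With `N(x) = 1` and `N(a) = 0` this is `a`.
-/

open Finset

section PowerSums

variable {G M : Type*}

theorem sum_range_pow_inv_eq_sum_range_pow [Group G] [AddCommMonoid M] {g : G} {n : ℕ}
    (hg : g ^ n = 1) (f : G → M) :
    ∑ i ∈ range n, f (g ^ i)⁻¹ = ∑ i ∈ range n, f (g ^ i) := by
  cases n with
  | zero => rfl
  | succ m =>
    have hinv : ∀ i ∈ range (m + 1), (g ^ (m - i))⁻¹ = g ^ (i + 1) := fun i hi => by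
      rw [inv_eq_iff_mul_eq_one, ← pow_add, ← hg]
      congr 1
      have := mem_range.1 hi
      omega
    calc ∑ i ∈ range (m + 1), f (g ^ i)⁻¹
        = ∑ i ∈ range (m + 1), f (g ^ (m - i))⁻¹ := (sum_range_reflect _ _).symm
      _ = ∑ i ∈ range (m + 1), f (g ^ (i + 1)) := sum_congr rfl fun i hi => by rw [hinv i hi]
      _ = ∑ i ∈ range (m + 1), f (g ^ i) := by
        rw [sum_range_succ, sum_range_succ' (fun i => f (g ^ i)), hg, pow_zero]

theorem smul_sum_range_pow_smul_sub [Monoid G] [AddCommGroup M] [DistribMulAction G M]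
    (g : G) (i : ℕ) (y : M) :
    g • ∑ k ∈ range i, g ^ k • y - ∑ k ∈ range i, g ^ k • y = g ^ i • y - y := by
  simp only [smul_sum, smul_smul, ← pow_succ']
  simpa using sum_range_sub (fun k => g ^ k • y) i

end PowerSums

namespace MulSemiringAction

variable {G R : Type*} [Group G] [Ring R] [MulSemiringAction G R]

def norm (g : G) (n : ℕ) (a : R) : R :=
  ∑ i ∈ range n, g ^ i • a

def homotopy (g : G) (n : ℕ) (x a : R) : R :=
  ∑ i ∈ Ico 1 n, ∑ k ∈ range i, g ^ k • (x * (g ^ i)⁻¹ • a)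

theorem homotopy_eq_sum_range (g : G) (n : ℕ) (x a : R) :
    homotopy g n x a = ∑ i ∈ range n, ∑ k ∈ range i, g ^ k • (x * (g ^ i)⁻¹ • a) := by
  refine sum_subset (fun i hi => mem_range.2 (mem_Ico.1 hi).2) fun i hi hi' => ?_
  obtain rfl : i = 0 := by simp only [mem_range, mem_Ico] at hi hi'; omega
  rfl

theorem smul_homotopy_sub_homotopy {g : G} {n : ℕ} (hg : g ^ n = 1) (x a : R) :
    g • homotopy g n x a - homotopy g n x a = norm g n x * a - x * norm g n a := by
  rw [homotopy_eq_sum_range, smul_sum, ← sum_sub_distrib]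
  calc ∑ i ∈ range n, (g • ∑ k ∈ range i, g ^ k • (x * (g ^ i)⁻¹ • a)
          - ∑ k ∈ range i, g ^ k • (x * (g ^ i)⁻¹ • a))
      = ∑ i ∈ range n, ((g ^ i • x) * a - x * (g ^ i)⁻¹ • a) := by
        refine sum_congr rfl fun i _ => ?_
        rw [smul_sum_range_pow_smul_sub, smul_mul', smul_inv_smul]
    _ = norm g n x * a - x * norm g n a := by
        rw [sum_sub_distrib, ← sum_mul, ← mul_sum, norm, norm,
          sum_range_pow_inv_eq_sum_range_pow hg fun h => h • a]

end MulSemiringAction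

theorem stmt15_general (R : Type*) [Ring R] (t : RingAut R) (n : ℕ)
    (htn : t ^ n = 1) (x : R) (hx : (∑ i ∈ Finset.range n, (t ^ i) x) = 1) :
    ∀ a : R, (∑ i ∈ Finset.range n, (t ^ i) a) = 0 → a = t (∑ i ∈ Finset.Ico 1 n, ∑ k ∈ Finset.range i, (t ^ k) (x * ((t ^ i)⁻¹) a)) - (∑ i ∈ Finset.Ico 1 n, ∑ k ∈ Finset.range i, (t ^ k) (x * ((t ^ i)⁻¹) a)) := by
  intro a ha
  have key := MulSemiringAction.smul_homotopy_sub_homotopy htn x a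
  rw [MulSemiringAction.norm, MulSemiringAction.norm] at key
  simp only [RingAut.smul_def] at key
  rw [hx, ha, one_mul, mul_zero, sub_zero] at key
  exact key.symm

theorem stmt15 (R : Type*) [Ring R] (t : RingAut R) (n : ℕ) (hn : 2 ≤ n)
    (htn : t ^ n = 1) (x : R) (hx : (∑ i ∈ Finset.range n, (t ^ i) x) = 1) :
    ∀ a : R, (∑ i ∈ Finset.range n, (t ^ i) a) = 0 → a = t (∑ i ∈ Finset.Ico 1 n, ∑ k ∈ Finset.range i, (t ^ k) (x * ((t ^ i)⁻¹) a)) - (∑ i ∈ Finset.Ico 1 n, ∑ k ∈ Finset.range i, (t ^ k) (x * ((t ^ i)⁻¹) a)) :=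
  stmt15_general R t n htn x hx
end

section
/- If there exists x ∈ R with N(x) = 1, then the kernel of T equals the image of N, i.e., the subring R^t of t-invariant elements coincides with the image of the norm map N : R → R. -/
/-! Since `N` is `R^t`-linear, a fixed element `a` equals `N (a * x)` when `N x = 1`; conversely
`t` only permutes the summands of `N b` cyclically, because `t ^ n = 1`. -/

open Finset

section NormMap

variable {G M : Type*} [Monoid G]

theorem smul_sum_range_pow_smul_of_pow_eq_one [AddCommMonoid M] [DistribMulAction G M]
    {g : G} {n : ℕ} (hg : g ^ n = 1) (b : M) :
    g • ∑ i ∈ range n, g ^ i • b = ∑ i ∈ range n, g ^ i • b := by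
  rw [smul_sum]
  simp only [smul_smul, ← pow_succ']
  cases n with
  | zero => rfl
  | succ m =>
    rw [sum_range_succ, hg, sum_range_succ' _ m, pow_zero]

theorem sum_range_pow_smul_mul_of_smul_eq [Semiring M] [MulSemiringAction G M]
    {g : G} {a : M} (ha : g • a = a) (n : ℕ) (x : M) :
    ∑ i ∈ range n, g ^ i • (a * x) = a * ∑ i ∈ range n, g ^ i • x := by
  have hfix (i : ℕ) : g ^ i • a = a :=
    MulAction.mem_stabilizerSubmonoid_iff.mp <|
      pow_mem (MulAction.mem_stabilizerSubmonoid_iff.mpr ha) i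
  rw [mul_sum]
  exact sum_congr rfl fun i _ => by rw [smul_mul', hfix]

end NormMap

theorem stmt16_general (R : Type*) [Ring R] (t : RingAut R) (n : ℕ)
    (htn : t ^ n = 1) (hex : ∃ x : R, (∑ i ∈ Finset.range n, (t ^ i) x) = 1) :
    {a : R | t a - a = 0} = Set.range (fun b : R => (∑ i ∈ Finset.range n, (t ^ i) b)) := by
  obtain ⟨x, hx⟩ := hex
  simp only [← RingAut.smul_def] at hx ⊢
  ext a
  simp only [Set.mem_ofPred_eq, Set.mem_range, sub_eq_zero]
  constructor
  · intro ha
    exact ⟨a * x, by rw [sum_range_pow_smul_mul_of_smul_eq ha, hx, mul_one]⟩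
  · rintro ⟨b, rfl⟩
    exact smul_sum_range_pow_smul_of_pow_eq_one htn b

theorem stmt16 (R : Type*) [Ring R] (t : RingAut R) (n : ℕ) (hn : 2 ≤ n)
    (htn : t ^ n = 1) (hex : ∃ x : R, (∑ i ∈ Finset.range n, (t ^ i) x) = 1) :
    {a : R | t a - a = 0} = Set.range (fun b : R => (∑ i ∈ Finset.range n, (t ^ i) b)) :=
  stmt16_general R t n htn hex
end

section
/- If there exists x ∈ R with N(x) = 1, then the kernel of the norm map N equals the image of T, i.e., an element a ∈ R satisfies N(a) = 0 if and only if a = T(b) for some b ∈ R. -/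
/-!
Additive Hilbert 90 for a cyclic action. The norm `N = ∑ tⁱ` is `t`-invariant, so it kills
`t b - b`. Conversely, if `N x = 1` and `N a = 0`, put `sᵢ = ∑_{j<i} tʲ a`; then `t sᵢ = sᵢ₊₁ - a`,
and for `B = ∑_{i<n} sᵢ · tⁱ x` the difference `t B - B` telescopes to `sₙ tⁿ x - s₀ x - a · N x = -a`.
-/

open Finset

section CyclicAction

variable {G : Type*} [Monoid G] {g : G} {n : ℕ}

theorem sum_range_pow_succ_smul_of_pow_eq_one {M : Type*} [AddCommGroup M] [DistribMulAction G M]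
    (hg : g ^ n = 1) (x : M) :
    ∑ i ∈ range n, g ^ (i + 1) • x = ∑ i ∈ range n, g ^ i • x :=
  calc ∑ i ∈ range n, g ^ (i + 1) • x = ∑ i ∈ range (n + 1), g ^ i • x - x := by
        rw [sum_range_succ', pow_zero, one_smul, add_sub_cancel_right]
    _ = ∑ i ∈ range n, g ^ i • x := by
        rw [sum_range_succ, hg, one_smul, add_sub_cancel_right]

theorem sum_range_pow_smul_smul_sub_self {M : Type*} [AddCommGroup M] [DistribMulAction G M]
    (hg : g ^ n = 1) (b : M) :
    ∑ i ∈ range n, g ^ i • (g • b - b) = 0 := by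
  simp only [smul_sub, sum_sub_distrib, ← mul_smul, ← pow_succ]
  rw [sum_range_pow_succ_smul_of_pow_eq_one hg, sub_self]

theorem exists_smul_sub_self_eq_of_sum_range_pow_smul_eq_zero {R : Type*} [Ring R]
    [MulSemiringAction G R] (hg : g ^ n = 1) {x : R} (hx : ∑ i ∈ range n, g ^ i • x = 1)
    {a : R} (ha : ∑ i ∈ range n, g ^ i • a = 0) :
    ∃ b : R, g • b - b = a := by
  set s : ℕ → R := fun i ↦ ∑ j ∈ range i, g ^ j • a with s_def
  have hs : ∀ i, g • s i = s (i + 1) - a := fun i ↦ by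
    simp only [s_def, smul_sum, ← mul_smul, ← pow_succ']
    rw [sum_range_succ', pow_zero, one_smul, add_sub_cancel_right]
  set B := ∑ i ∈ range n, s i * g ^ i • x
  have hB : g • B - B = -a :=
    calc g • B - B = ∑ i ∈ range n,
          ((s (i + 1) * g ^ (i + 1) • x - s i * g ^ i • x) - a * g ^ (i + 1) • x) := by
          rw [smul_sum, ← sum_sub_distrib]
          refine sum_congr rfl fun i _ ↦ ?_
          rw [smul_mul', hs, ← mul_smul, ← pow_succ', sub_mul]
          abel
      _ = s n * g ^ n • x - s 0 * g ^ 0 • x - a * ∑ i ∈ range n, g ^ (i + 1) • x := by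
          rw [sum_sub_distrib, sum_range_sub (fun i ↦ s i * g ^ i • x), mul_sum]
      _ = -a := by
          rw [sum_range_pow_succ_smul_of_pow_eq_one hg, hx, show s n = 0 from ha]
          simp [s_def]
  exact ⟨-B, by rw [smul_neg, neg_sub_neg, ← neg_sub, hB, neg_neg]⟩

end CyclicAction

theorem stmt17_general (R : Type*) [Ring R] (t : RingAut R) (n : ℕ)
    (htn : t ^ n = 1) (hex : ∃ x : R, (∑ i ∈ Finset.range n, (t ^ i) x) = 1) :
    ∀ a : R, (∑ i ∈ Finset.range n, (t ^ i) a) = 0 ↔ ∃ b : R, t b - b = a := by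
  obtain ⟨x, hx⟩ := hex
  simp only [← RingAut.smul_def] at hx ⊢
  refine fun a ↦ ⟨exists_smul_sub_self_eq_of_sum_range_pow_smul_eq_zero htn hx, ?_⟩
  rintro ⟨b, rfl⟩
  exact sum_range_pow_smul_smul_sub_self htn b

theorem stmt17 (R : Type*) [Ring R] (t : RingAut R) (n : ℕ) (hn : 2 ≤ n)
    (htn : t ^ n = 1) (hex : ∃ x : R, (∑ i ∈ Finset.range n, (t ^ i) x) = 1) :
    ∀ a : R, (∑ i ∈ Finset.range n, (t ^ i) a) = 0 ↔ ∃ b : R, t b - b = a :=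
  stmt17_general R t n htn hex
end
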